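/- arXiv:1605.07988 — 5 statements merged into one kernel-verified Lean document; each statement's English description precedes it below -/
import Mathlib

section
/- Let p_0 be a prime and M' a positive integer with gcd(p_0, M') = 1, and let M be a positive integer with M > p_0^2 · M'. Let y' be an integer with 0 ≤ y' < M'. Then for every residue s' ∈ Z_{p_0} there exists an integer y with 0 ≤ y < M, y ≡ y' (mod M'), and y ≡ s' (mod p_0). In other words, an unauthorized coalition knowing y mod M' cannot rule out any candidate secret in Z_{p_0}. -/
/-- If `gcd(p₀, M') = 1` and `M > p₀² · M'`, then for every known residue
`y' < M'` and every candidate secret `s' ∈ Z_{p₀}` there is a consistent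
candidate `y < M` with `y ≡ y' (mod M')` and `y ≡ s' (mod p₀)`: an
unauthorized coalition cannot rule out any secret. -/
theorem every_secret_candidate_consistent
    (p₀ M' M : ℕ) (hp₀ : Nat.Prime p₀) (hM' : 0 < M')
    (hco : Nat.Coprime p₀ M') (hM : p₀ ^ 2 * M' < M)
    (y' : ℕ) (hy' : y' < M') :
    ∀ s' : ℕ, s' < p₀ →
      ∃ y : ℕ, y < M ∧ y % M' = y' ∧ y % p₀ = s' := by
  intro s' hs'
  obtain ⟨z, hz1, hz2⟩ := Nat.chineseRemainder hco s' y'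
  have hpos : 0 < p₀ * M' := Nat.mul_pos hp₀.pos hM'
  refine ⟨z % (p₀ * M'), ?_, ?_, ?_⟩
  · calc z % (p₀ * M') < p₀ * M' := Nat.mod_lt _ hpos
      _ ≤ p₀ ^ 2 * M' := by
          have : p₀ ≤ p₀ ^ 2 := by nlinarith [hp₀.two_le]
          exact Nat.mul_le_mul_right _ this
      _ < M := hM
  · have : z % (p₀ * M') % M' = z % M' := Nat.mod_mod_of_dvd _ ⟨p₀, by ring⟩
    rw [this, hz2, Nat.mod_eq_of_lt hy']
  · have : z % (p₀ * M') % p₀ = z % p₀ := Nat.mod_mod_of_dvd _ ⟨M', rfl⟩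
    rw [this, hz1, Nat.mod_eq_of_lt hs']
end

section
/- Let p_1 < p_2 < ... < p_n be a strictly increasing sequence of positive integers and let t be an integer with 1 ≤ t ≤ n and 2t ≥ n + 2 (equivalently, t ≥ n − t + 2). Then there is no integer q with p_t < q < p_{n−t+2}. Consequently, the Harn-Fuyou multilevel scheme, which requires an auxiliary prime q in the open interval (p_t, p_{n−t+2}), is not well-defined whenever the threshold t composes at least one more than the majority of the n participants. -/
/-- If the threshold `t` satisfies `2t ≥ n + 2`, then there is no integer `q`
with `p t < q < p (n - t + 2)`; hence the Harn-Fuyou scheme, which requires an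
auxiliary prime in this open interval, is not well-defined in this case. -/
theorem harn_fuyou_gap_empty
    (n t : ℕ) (p : ℕ → ℕ)
    (hpos : ∀ i, 1 ≤ i → i ≤ n → 0 < p i)
    (hmono : ∀ i j, 1 ≤ i → i < j → j ≤ n → p i < p j)
    (ht1 : 1 ≤ t) (htn : t ≤ n) (hmaj : n + 2 ≤ 2 * t) :
    ¬ ∃ q : ℤ, (p t : ℤ) < q ∧ q < (p (n - t + 2) : ℤ) := by
  rintro ⟨q, h1, h2⟩
  have hle : n - t + 2 ≤ t := by omega
  have hkey : p (n - t + 2) ≤ p t := by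
    rcases eq_or_lt_of_le hle with h | h
    · rw [h]
    · exact le_of_lt (hmono _ _ (by omega) h htn)
  have : (p (n - t + 2) : ℤ) ≤ (p t : ℤ) := by exact_mod_cast hkey
  omega
end

section
/- Let p_1 < p_2 < ... < p_n be pairwise coprime positive integers, let 2 ≤ t ≤ n, and let s be an integer with ∏_{i=n−t+2}^{n} p_i < s < ∏_{i=1}^{t} p_i. Define the shares s_k = s mod p_k. Then for any subset A ⊆ {1, ..., n} with |A| = t, the secret s is the unique integer z in the interval (∏_{i=n−t+2}^{n} p_i, ∏_{i=1}^{t} p_i) satisfying z ≡ s_k (mod p_k) for all k ∈ A. -/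
/-- Mignotte's `(t,n)` threshold scheme: a secret `s` chosen in the interval
`(∏_{i=n-t+2}^{n} p i, ∏_{i=1}^{t} p i)` is the unique integer in that
interval consistent with the shares `s mod p k` of any coalition of `t`
participants. -/
theorem mignotte_unique_reconstruction
    (n t : ℕ) (ht2 : 2 ≤ t) (htn : t ≤ n) (p : ℕ → ℕ)
    (hpos : ∀ i, 1 ≤ i → i ≤ n → 0 < p i)
    (hmono : ∀ i j, 1 ≤ i → i < j → j ≤ n → p i < p j)
    (hcop : ∀ i j, 1 ≤ i → i < j → j ≤ n → Nat.Coprime (p i) (p j))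
    (s : ℕ)
    (hslb : ∏ i ∈ Finset.Icc (n - t + 2) n, p i < s)
    (hsub : s < ∏ i ∈ Finset.Icc 1 t, p i)
    (A : Finset ℕ) (hA : A ⊆ Finset.Icc 1 n) (hcard : A.card = t) :
    ∀ z : ℕ, ∏ i ∈ Finset.Icc (n - t + 2) n, p i < z →
      z < ∏ i ∈ Finset.Icc 1 t, p i →
      (∀ k ∈ A, z % p k = s % p k) → z = s := by
  intro z hzl hzu hz
  have ht0 : 0 < t := by omega
  have hmemA : ∀ k ∈ A, 1 ≤ k ∧ k ≤ n := fun k hk => Finset.mem_Icc.mp (hA hk)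
  set f : Fin t ↪o ℕ := A.orderEmbOfFin hcard with hf
  have hfm : ∀ i, f i ∈ A := fun i => A.orderEmbOfFin_mem hcard i
  have hf1 : ∀ m : ℕ, (hm : m < t) → m + 1 ≤ f ⟨m, hm⟩ := by
    intro m
    induction m with
    | zero => intro hm; exact (hmemA _ (hfm _)).1
    | succ k ih =>
      intro hm
      have hk : k < t := by omega
      have hlt : f ⟨k, hk⟩ < f ⟨k+1, hm⟩ := f.strictMono (by simp [Fin.lt_def])
      have := ih hk
      omega
  -- ∏ over Icc 1 t ≤ ∏ over A
  have hprodle : ∏ i ∈ Finset.Icc 1 t, p i ≤ ∏ k ∈ A, p k := by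
    have hAprod : ∏ k ∈ A, p k = ∏ i : Fin t, p (f i) := by
      refine (Finset.prod_bij (fun i _ => f i) (fun i _ => hfm i) ?_ ?_ (fun i _ => rfl)).symm
      · intro a _ b _ h; exact f.injective h
      · intro b hb
        have : b ∈ Set.range f := by rw [hf, A.range_orderEmbOfFin hcard]; exact hb
        obtain ⟨i, hi⟩ := this
        exact ⟨i, Finset.mem_univ i, hi⟩
    rw [hAprod, ← Finset.Ico_add_one_right_eq_Icc, Finset.prod_Ico_eq_prod_range]
    simp only [Nat.add_one_sub_one]
    rw [← Fin.prod_univ_eq_prod_range (fun i => p (1 + i))]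
    apply Finset.prod_le_prod (fun _ _ => Nat.zero_le _)
    intro i _
    have h1 : (i : ℕ) + 1 ≤ f i := by
      have := hf1 i.val i.isLt
      simpa using this
    have h2 : f i ≤ n := (hmemA _ (hfm _)).2
    rcases Nat.eq_or_lt_of_le h1 with h | h
    · rw [Nat.add_comm 1 i, h]
    · exact le_of_lt (hmono _ _ (by omega) (by omega) h2)
  -- divisibility
  have hdvd : ∀ k ∈ A, ((p k : ℤ)) ∣ (s : ℤ) - z := by
    intro k hk
    exact (Nat.modEq_iff_dvd).mp (hz k hk)
  have hpair : (↑A : Set ℕ).Pairwise (Function.onFun IsCoprime fun k => (p k : ℤ)) := by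
    intro i hi j hj hij
    simp only [Function.onFun]
    rw [Nat.isCoprime_iff_coprime]
    rcases lt_or_gt_of_ne hij with h | h
    · exact hcop i j (hmemA i hi).1 h (hmemA j hj).2
    · exact (hcop j i (hmemA j hj).1 h (hmemA i hi).2).symm
  have hPdvd : (↑(∏ k ∈ A, p k) : ℤ) ∣ (s : ℤ) - z := by
    rw [Nat.cast_prod]
    exact Finset.prod_dvd_of_coprime hpair hdvd
  have habs : |(s : ℤ) - z| < (↑(∏ k ∈ A, p k) : ℤ) := by
    have hs : (s : ℤ) < ∏ k ∈ A, p k := by exact_mod_cast lt_of_lt_of_le hsub hprodle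
    have hz' : (z : ℤ) < ∏ k ∈ A, p k := by exact_mod_cast lt_of_lt_of_le hzu hprodle
    rw [abs_lt]
    constructor <;> [skip; skip] <;> push_cast at * <;> omega
  have : (s : ℤ) - z = 0 := Int.eq_zero_of_abs_lt_dvd hPdvd habs
  omega
end

section
/- Let p_0 be a prime, let m ≥ 1, and let σ_1, ..., σ_m ∈ Z_{p_0} be partial secrets with s = (σ_1 + σ_2 + ... + σ_m) mod p_0. Let p_1 < p_2 < ... < p_n be pairwise coprime positive integers, let thresholds t_1, ..., t_m satisfy 1 ≤ t_i ≤ n, and for each i let y_i be a nonnegative integer with y_i ≡ σ_i (mod p_0) and y_i < ∏_{j=1}^{t_i} p_j. Suppose a coalition A ⊆ {1, ..., n} satisfies, for every i, that the set of its members whose shares are usable at level i has size at least t_i; let z_i be the unique nonnegative integer below the product of those members' moduli agreeing with y_i modulo each of them. Then z_i = y_i for every i, and (z_1 + z_2 + ... + z_m) mod p_0 = s; i.e., an authorized coalition of the conjunctive multilevel scheme recovers the secret. -/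
/-- The product of the `t` smallest moduli is at most the product over any
set `B ⊆ [1,n]` of size at least `t`, when `p` is strictly increasing. -/
lemma prod_Icc_le_prod_of_card_le
    (n : ℕ) (p : ℕ → ℕ)
    (hpos : ∀ i, 1 ≤ i → i ≤ n → 0 < p i)
    (hmono : ∀ i j, 1 ≤ i → i < j → j ≤ n → p i < p j)
    (t : ℕ) (B : Finset ℕ) (hB : B ⊆ Finset.Icc 1 n)
    (hcard : t ≤ B.card) :
    ∏ j ∈ Finset.Icc 1 t, p j ≤ ∏ k ∈ B, p k := by
  classical
  set c := B.card with hc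
  let f : Fin c ↪o ℕ := B.orderEmbOfFin rfl
  have hfB : ∀ j : Fin c, f j ∈ B := fun j => B.orderEmbOfFin_mem rfl j
  have hfIcc : ∀ j : Fin c, 1 ≤ f j ∧ f j ≤ n := by
    intro j
    have := hB (hfB j)
    simpa using this
  -- each f j ≥ j + 1
  have key : ∀ j : ℕ, ∀ h : j < c, j + 1 ≤ f ⟨j, h⟩ := by
    intro j
    induction j with
    | zero => intro h; exact (hfIcc ⟨0, h⟩).1
    | succ k ih =>
      intro h
      have hk : k < c := Nat.lt_of_succ_lt h
      have h1 : f ⟨k, hk⟩ < f ⟨k + 1, h⟩ := by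
        apply f.strictMono
        exact Fin.mk_lt_mk.mpr (Nat.lt_succ_self k)
      have := ih hk
      omega
  -- the map g : [1,t] → B
  have htc : t ≤ c := hcard
  let g : ℕ → ℕ := fun i => if h : i - 1 < c then f ⟨i - 1, h⟩ else 0
  have hg : ∀ i ∈ Finset.Icc 1 t, g i ∈ B ∧ i ≤ g i := by
    intro i hi
    simp only [Finset.mem_Icc] at hi
    have h1 : i - 1 < c := by omega
    have h2 : g i = f ⟨i - 1, h1⟩ := dif_pos h1
    refine ⟨h2 ▸ hfB _, ?_⟩
    have := key (i - 1) h1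
    omega
  have hginj : Set.InjOn g (Finset.Icc 1 t) := by
    intro a ha b hb hab
    simp only [Finset.coe_Icc, Set.mem_Icc] at ha hb
    have h1 : a - 1 < c := by omega
    have h2 : b - 1 < c := by omega
    rw [show g a = f ⟨a - 1, h1⟩ from dif_pos h1,
        show g b = f ⟨b - 1, h2⟩ from dif_pos h2] at hab
    have := f.injective hab
    have := Fin.mk.injEq (a-1) h1 (b-1) h2 ▸ this
    omega
  have step1 : ∏ j ∈ Finset.Icc 1 t, p j ≤ ∏ j ∈ Finset.Icc 1 t, p (g j) := by
    apply Finset.prod_le_prod' 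
    intro i hi
    obtain ⟨hgB, hle⟩ := hg i hi
    simp only [Finset.mem_Icc] at hi
    have hgIcc := hB hgB
    simp only [Finset.mem_Icc] at hgIcc
    rcases Nat.lt_or_ge i (g i) with h | h
    · exact le_of_lt (hmono i (g i) hi.1 h hgIcc.2)
    · exact le_of_eq (congrArg p (le_antisymm hle h))
  have step2 : ∏ j ∈ Finset.Icc 1 t, p (g j) = ∏ k ∈ (Finset.Icc 1 t).image g, p k :=
    (Finset.prod_image (fun a ha b hb => hginj ha hb)).symm
  have step3 : (Finset.Icc 1 t).image g ⊆ B := by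
    intro k hk
    simp only [Finset.mem_image] at hk
    obtain ⟨a, ha, rfl⟩ := hk
    exact (hg a ha).1
  have step4 : ∏ k ∈ (Finset.Icc 1 t).image g, p k ≤ ∏ k ∈ B, p k := by
    apply Finset.prod_le_prod_of_subset_of_one_le' step3
    intro k hkB _
    have := hB hkB
    simp only [Finset.mem_Icc] at this
    exact hpos k this.1 this.2
  omega

/-- Correctness of the conjunctive multilevel scheme: if a coalition has, at
every level `i`, at least `t i` usable members `B i`, and `z i` is the unique
nonnegative integer below the product of those members' moduli agreeing with
`y i` modulo each of them, then `z i = y i` for every level and the secret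
`s = (σ 1 + ... + σ m) mod p₀` is recovered as `(z 1 + ... + z m) mod p₀`. -/
theorem conjunctive_multilevel_reconstruction
    (p₀ : ℕ) (hp₀ : Nat.Prime p₀)
    (m : ℕ) (hm : 1 ≤ m)
    (σ : ℕ → ℕ) (hσ : ∀ i, 1 ≤ i → i ≤ m → σ i < p₀)
    (s : ℕ) (hs : s = (∑ i ∈ Finset.Icc 1 m, σ i) % p₀)
    (n : ℕ) (p : ℕ → ℕ)
    (hpos : ∀ i, 1 ≤ i → i ≤ n → 0 < p i)
    (hmono : ∀ i j, 1 ≤ i → i < j → j ≤ n → p i < p j)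
    (hcop : ∀ i j, 1 ≤ i → i < j → j ≤ n → Nat.Coprime (p i) (p j))
    (t : ℕ → ℕ) (ht : ∀ i, 1 ≤ i → i ≤ m → 1 ≤ t i ∧ t i ≤ n)
    (y : ℕ → ℕ)
    (hyσ : ∀ i, 1 ≤ i → i ≤ m → y i % p₀ = σ i)
    (hyM : ∀ i, 1 ≤ i → i ≤ m → y i < ∏ j ∈ Finset.Icc 1 (t i), p j)
    (A : Finset ℕ) (hA : A ⊆ Finset.Icc 1 n)
    (B : ℕ → Finset ℕ) (hBA : ∀ i, 1 ≤ i → i ≤ m → B i ⊆ A)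
    (hBcard : ∀ i, 1 ≤ i → i ≤ m → t i ≤ (B i).card)
    (z : ℕ → ℕ)
    (hzlt : ∀ i, 1 ≤ i → i ≤ m → z i < ∏ k ∈ B i, p k)
    (hzcong : ∀ i, 1 ≤ i → i ≤ m → ∀ k ∈ B i, z i % p k = y i % p k) :
    (∀ i, 1 ≤ i → i ≤ m → z i = y i) ∧
    (∑ i ∈ Finset.Icc 1 m, z i) % p₀ = s := by
  have hBIcc : ∀ i, 1 ≤ i → i ≤ m → B i ⊆ Finset.Icc 1 n := by
    intro i h1 h2
    exact (hBA i h1 h2).trans hA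
  have hzy : ∀ i, 1 ≤ i → i ≤ m → z i = y i := by
    intro i h1 h2
    -- CRT uniqueness over ℤ
    have hdvd : ((∏ k ∈ B i, p k : ℕ) : ℤ) ∣ (y i : ℤ) - (z i : ℤ) := by
      push_cast
      apply Finset.prod_dvd_of_coprime
      · intro a ha b hb hab
        simp only [Finset.mem_coe] at ha hb
        have haI := hBIcc i h1 h2 ha
        have hbI := hBIcc i h1 h2 hb
        simp only [Finset.mem_Icc] at haI hbI
        simp only [Function.onFun]
        rcases Nat.lt_or_ge a b with h | h
        · exact Nat.isCoprime_iff_coprime.mpr (hcop a b haI.1 h hbI.2)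
        · have hba : b < a := lt_of_le_of_ne h (Ne.symm hab)
          exact (Nat.isCoprime_iff_coprime.mpr (hcop b a hbI.1 hba haI.2)).symm
      · intro k hk
        have : z i ≡ y i [MOD p k] := hzcong i h1 h2 k hk
        exact this.dvd
    have hmodeq : z i ≡ y i [MOD ∏ k ∈ B i, p k] := Nat.modEq_iff_dvd.mpr hdvd
    have hylt : y i < ∏ k ∈ B i, p k := by
      calc y i < ∏ j ∈ Finset.Icc 1 (t i), p j := hyM i h1 h2
        _ ≤ ∏ k ∈ B i, p k := prod_Icc_le_prod_of_card_le n p hpos hmono (t i) (B i)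
              (hBIcc i h1 h2) (hBcard i h1 h2)
    exact hmodeq.eq_of_lt_of_lt (hzlt i h1 h2) hylt
  refine ⟨hzy, ?_⟩
  have hsum : ∑ i ∈ Finset.Icc 1 m, z i = ∑ i ∈ Finset.Icc 1 m, y i := by
    apply Finset.sum_congr rfl
    intro i hi
    simp only [Finset.mem_Icc] at hi
    exact hzy i hi.1 hi.2
  rw [hsum, hs]
  rw [Finset.sum_nat_mod, Finset.sum_nat_mod (Finset.Icc 1 m) p₀ σ]
  congr 1
  apply Finset.sum_congr rfl
  intro i hi
  simp only [Finset.mem_Icc] at hi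
  rw [hyσ i hi.1 hi.2, Nat.mod_eq_of_lt (hσ i hi.1 hi.2)]
end

section
/- Let p_1, ..., p_r be pairwise coprime positive integers (r ≥ 1), let M_A = ∏_{k=1}^{r} p_k, and for each k let P_k = M_A / p_k and let I_k be an inverse of P_k modulo p_k (P_k·I_k ≡ 1 (mod p_k)). Let y be an integer with 0 ≤ y < M_A and define ν_k = ((y mod p_k)·P_k·I_k) mod M_A. Then there exists an integer δ with 0 ≤ δ < r such that ν_1 + ν_2 + ... + ν_r = y + δ·M_A. Consequently, for any integers msg and N ≥ 1, ∏_{k=1}^{r} msg^{ν_k} ≡ msg^{y}·(msg^{M_A})^{δ} (mod N), so the product of the partial RSA signatures equals the true signature msg^y up to a correction factor κ^δ with κ = msg^{M_A} and δ < r. -/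
/-- Combining partial RSA signatures: with pairwise coprime moduli
`p 1, ..., p r`, `M_A = ∏ p k`, `P k = M_A / p k`, `I k` an inverse of `P k`
modulo `p k`, `0 ≤ y < M_A` and `ν k = ((y mod p k)·P k·I k) mod M_A`, the sum
of the `ν k` equals `y + δ·M_A` for some `δ < r`; consequently the product of
the partial signatures `msg^{ν k}` equals `msg^y · (msg^{M_A})^δ` modulo any
`N ≥ 1`. -/
theorem partial_signatures_combine
    (r : ℕ) (hr : 1 ≤ r) (p : ℕ → ℕ)
    (hpos : ∀ k, 1 ≤ k → k ≤ r → 0 < p k)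
    (hcop : ∀ i j, 1 ≤ i → i < j → j ≤ r → Nat.Coprime (p i) (p j))
    (MA : ℕ) (hMA : MA = ∏ k ∈ Finset.Icc 1 r, p k)
    (P : ℕ → ℕ) (hP : ∀ k, 1 ≤ k → k ≤ r → P k = MA / p k)
    (I : ℕ → ℕ) (hI : ∀ k, 1 ≤ k → k ≤ r → (P k * I k) % p k = 1)
    (y : ℕ) (hy : y < MA)
    (ν : ℕ → ℕ) (hν : ∀ k, 1 ≤ k → k ≤ r → ν k = ((y % p k) * P k * I k) % MA) :
    ∃ δ : ℕ, δ < r ∧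
      (∑ k ∈ Finset.Icc 1 r, ν k) = y + δ * MA ∧
      ∀ msg N : ℕ, 1 ≤ N →
        (∏ k ∈ Finset.Icc 1 r, msg ^ ν k) ≡ msg ^ y * (msg ^ MA) ^ δ [MOD N] := by
  set s : Finset ℕ := Finset.Icc 1 r with hs
  have hmem : ∀ k ∈ s, 1 ≤ k ∧ k ≤ r := by
    intro k hk; exact Finset.mem_Icc.mp hk
  have hpos' : ∀ k ∈ s, 0 < p k := fun k hk => hpos k (hmem k hk).1 (hmem k hk).2
  have hMApos : 0 < MA := by
    rw [hMA]; exact Finset.prod_pos hpos'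
  have hdvdMA : ∀ k ∈ s, p k ∣ MA := by
    intro k hk; rw [hMA]; exact Finset.dvd_prod_of_mem p hk
  have hPprod : ∀ k ∈ s, P k = ∏ i ∈ s.erase k, p i := by
    intro k hk
    have h1 : p k * ∏ i ∈ s.erase k, p i = MA := by
      rw [hMA]; exact Finset.mul_prod_erase s p hk
    rw [hP k (hmem k hk).1 (hmem k hk).2, ← h1,
      Nat.mul_div_cancel_left _ (hpos' k hk)]
  -- sum of ν ≡ y modulo each p j
  have hsum_mod : ∀ j ∈ s, (∑ k ∈ s, ν k) ≡ y [MOD p j] := by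
    intro j hj
    have hj1 := (hmem j hj).1
    have hj2 := (hmem j hj).2
    have hsplit : ∑ k ∈ s, ν k = ν j + ∑ k ∈ s.erase j, ν k :=
      (Finset.add_sum_erase s ν hj).symm
    have hzero : p j ∣ ∑ k ∈ s.erase j, ν k := by
      refine Finset.dvd_sum ?_
      intro k hk
      have hks : k ∈ s := Finset.mem_of_mem_erase hk
      have hjk : j ∈ s.erase k := by
        refine Finset.mem_erase.mpr ⟨?_, hj⟩
        exact fun h => (Finset.mem_erase.mp hk).1 h.symm
      have hPj : p j ∣ P k := by
        rw [hPprod k hks]; exact Finset.dvd_prod_of_mem p hjk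
      have hdvd1 : p j ∣ (y % p k) * P k * I k :=
        Dvd.dvd.mul_right (Dvd.dvd.mul_left hPj _) _
      rw [hν k (hmem k hks).1 (hmem k hks).2]
      exact (Nat.dvd_mod_iff (hdvdMA j hj)).mpr hdvd1
    have hpj1 : 1 < p j := by
      have hI' := hI j hj1 hj2
      rcases Nat.lt_or_ge (p j) 2 with h | h
      · have hp1 : p j = 1 := by have := hpos j hj1 hj2; omega
        rw [hp1, Nat.mod_one] at hI'; omega
      · omega
    have hνj : ν j ≡ y [MOD p j] := by
      rw [hν j hj1 hj2]
      calc ((y % p j) * P j * I j) % MA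
          ≡ (y % p j) * P j * I j [MOD p j] :=
            Nat.mod_mod_of_dvd _ (hdvdMA j hj)
        _ = (y % p j) * (P j * I j) := by ring
        _ ≡ y * (P j * I j) [MOD p j] :=
            Nat.ModEq.mul_right _ (Nat.mod_modEq y (p j))
        _ ≡ y * 1 [MOD p j] := by
            refine Nat.ModEq.mul_left y ?_
            show (P j * I j) % p j = 1 % p j
            rw [hI j hj1 hj2, Nat.mod_eq_of_lt hpj1]
        _ = y := mul_one y
    calc (∑ k ∈ s, ν k) = ν j + ∑ k ∈ s.erase j, ν k := hsplit
      _ ≡ ν j + 0 [MOD p j] :=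
          Nat.ModEq.add_left _ ((Nat.modEq_zero_iff_dvd).mpr hzero)
      _ = ν j := by ring
      _ ≡ y [MOD p j] := hνj
  -- lift to mod MA via coprimality
  have hMAdvd : (MA : ℤ) ∣ ((∑ k ∈ s, ν k : ℕ) : ℤ) - (y : ℤ) := by
    have hprod : ((MA : ℤ)) = ∏ k ∈ s, ((p k : ℤ)) := by
      rw [hMA]; push_cast; ring
    rw [hprod]
    refine Finset.prod_dvd_of_coprime ?_ ?_
    · intro i hi j hj hij
      simp only [Function.onFun]
      have hi' := hmem i hi
      have hj' := hmem j hj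
      rcases lt_or_gt_of_ne hij with h | h
      · exact (Nat.isCoprime_iff_coprime).mpr (hcop i j hi'.1 h hj'.2)
      · exact (Nat.isCoprime_iff_coprime).mpr ((hcop j i hj'.1 h hi'.2).symm)
    · intro i hi
      exact dvd_sub_comm.mp (hsum_mod i hi).dvd
  have hmodMA : (∑ k ∈ s, ν k) ≡ y [MOD MA] :=
    (Nat.modEq_iff_dvd).mpr (dvd_sub_comm.mp hMAdvd)
  have hsummod : (∑ k ∈ s, ν k) % MA = y := by
    have h := hmodMA
    unfold Nat.ModEq at h
    rw [h, Nat.mod_eq_of_lt hy]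
  have hex : ∃ δ : ℕ, δ < r ∧ (∑ k ∈ s, ν k) = y + δ * MA := by
    refine ⟨(∑ k ∈ s, ν k) / MA, ?_, ?_⟩
    · have hbound : (∑ k ∈ s, ν k) < r * MA := by
        have h1 : ∀ k ∈ s, ν k ≤ MA - 1 := by
          intro k hk
          have h0 := hν k (hmem k hk).1 (hmem k hk).2
          have h2 : ν k < MA := by rw [h0]; exact Nat.mod_lt _ hMApos
          omega
        have h3 : (∑ k ∈ s, ν k) ≤ ∑ _k ∈ s, (MA - 1) := Finset.sum_le_sum h1
        have h4 : (∑ _k ∈ s, (MA - 1)) = r * (MA - 1) := by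
          rw [Finset.sum_const, hs, Nat.card_Icc]
          simp [Nat.mul_comm]
        have h5 : r * (MA - 1) < r * MA :=
          mul_lt_mul_of_pos_left (by omega) (by omega)
        omega
      exact Nat.div_lt_iff_lt_mul hMApos |>.mpr hbound
    · have h := Nat.mod_add_div' (∑ k ∈ s, ν k) MA
      rw [hsummod] at h
      omega
  obtain ⟨δ, hδr, hδeq⟩ := hex
  refine ⟨δ, hδr, hδeq, ?_⟩
  intro msg N _
  have heq : (∏ k ∈ s, msg ^ ν k) = msg ^ y * (msg ^ MA) ^ δ := by
    rw [Finset.prod_pow_eq_pow_sum, hδeq, pow_add, mul_comm δ MA, pow_mul]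
  rw [heq]
end
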